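/- arXiv:1309.2605 — 2 statements merged into one kernel-verified Lean document; each statement's English description precedes it below -/
import Mathlib

section
/- Let p be a positive integer and let D ∈ ℤ[x₁,…,x_p] be a polynomial with deg(D, x_i) ≥ 1 for each i ∈ {1,…,p}. Then there exist an integer n > p and a system T ⊆ E_n such that the projection (x₁,…,xₙ) ↦ (x₁,…,x_p) is a bijection from the set of tuples (x₁,…,xₙ) ∈ ℕⁿ solving T onto the set of tuples (x₁,…,x_p) ∈ ℕᵖ with D(x₁,…,x_p) = 0. In particular, the equation D(x₁,…,x_p) = 0 and the system T have the same number of solutions in non-negative integers. -/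
/-- A system `S ⊆ E_n`, encoded by the set `eqOne` of indices `i` carrying the
equation `x_i = 1`, and the sets `addEq`, `mulEq` of triples `(i, j, k)` carrying
the equations `x_i + x_j = x_k` and `x_i · x_j = x_k` respectively. -/
structure SystemEn (n : ℕ) where
  eqOne : Finset (Fin n)
  addEq : Finset (Fin n × Fin n × Fin n)
  mulEq : Finset (Fin n × Fin n × Fin n)

/-- A tuple `x` solves the system `S` if it satisfies all equations of `S`. -/
def SystemEn.Solves {n : ℕ} {R : Type*} [Semiring R] (S : SystemEn n) (x : Fin n → R) : Prop :=
  (∀ i ∈ S.eqOne, x i = 1) ∧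
  (∀ t ∈ S.addEq, x t.1 + x t.2.1 = x t.2.2) ∧
  (∀ t ∈ S.mulEq, x t.1 * x t.2.1 = x t.2.2)

/-- `fBound n` is the smallest non-negative integer `b` such that for each system
`S ⊆ E_n` with a finite number of solutions in integers `x₁, …, xₙ`, all these
solutions belong to `[-b, b]ⁿ`. -/
noncomputable def fBound (n : ℕ) : ℕ :=
  sInf {b : ℕ | ∀ S : SystemEn n, {x : Fin n → ℤ | S.Solves x}.Finite →
    ∀ x : Fin n → ℤ, S.Solves x → ∀ i, |x i| ≤ (b : ℤ)}

/-- `gBound n` is the greatest finite total number of solutions of a subsystem of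
`E_n` in integers `x₁, …, xₙ`. -/
noncomputable def gBound (n : ℕ) : ℕ :=
  sSup {c : ℕ | ∃ S : SystemEn n, {x : Fin n → ℤ | S.Solves x}.Finite ∧
    {x : Fin n → ℤ | S.Solves x}.ncard = c}

open MvPolynomial

/-!
Write `D = P - Q` with `P, Q` built from the inputs and the constants `0, 1` by `+` and `·`
(induction on `D`). Evaluate `P` and `Q` by a straight-line program whose every step is one
equation of `E_n`, add a wire `o` with `x_o = 1` and the equation `x_P · x_o = x_Q`. Each
auxiliary variable is then a function of the inputs, so solutions of the system correspond
exactly to the zeros of `D` in `ℕ^p`.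
-/

lemma Set.bijOn_of_rightInverse {α β : Type*} {π : α → β} {s : β → α}
    {A : Set α} {B : Set β} (hs : Function.RightInverse s π)
    (hA : ∀ a, a ∈ A ↔ a = s (π a) ∧ π a ∈ B) :
    Set.BijOn π A B where
  left a ha := ((hA a).1 ha).2
  right.left a₁ ha₁ a₂ ha₂ h := by rw [((hA a₁).1 ha₁).1, ((hA a₂).1 ha₂).1, h]
  right.right b hb := ⟨s b, (hA (s b)).2 ⟨by rw [hs b], by rwa [hs b]⟩, hs b⟩

-- Variables are indexed by `ℕ`, so that a system can grow before its size `n` is fixed.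
inductive Eqn
  | one (k : ℕ)
  | add (i j k : ℕ)
  | mul (i j k : ℕ)
  deriving DecidableEq

namespace Eqn

def Holds {R : Type*} [Semiring R] (y : ℕ → R) : Eqn → Prop
  | one k => y k = 1
  | add i j k => y i + y j = y k
  | mul i j k => y i * y j = y k

def VarsLt (n : ℕ) : Eqn → Prop
  | one k => k < n
  | add i j k | mul i j k => i < n ∧ j < n ∧ k < n

lemma VarsLt.mono {e : Eqn} {m n : ℕ} (he : e.VarsLt m) (hmn : m ≤ n) : e.VarsLt n := by
  cases e <;> simp only [VarsLt] at he ⊢ <;> omega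

end Eqn

def extendByZero {n : ℕ} {R : Type*} [Zero R] (y : Fin n → R) (k : ℕ) : R :=
  if h : k < n then y ⟨k, h⟩ else 0

lemma extendByZero_val {n : ℕ} {R : Type*} [Zero R] (y : Fin n → R) (k : Fin n) :
    extendByZero y k = y k := dif_pos k.isLt

namespace SystemEn

def ofList (n : ℕ) (l : List Eqn) : SystemEn n where
  eqOne := Finset.univ.filter fun k => Eqn.one k ∈ l
  addEq := Finset.univ.filter fun t => Eqn.add t.1 t.2.1 t.2.2 ∈ l
  mulEq := Finset.univ.filter fun t => Eqn.mul t.1 t.2.1 t.2.2 ∈ l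

lemma solves_ofList_iff {n : ℕ} {R : Type*} [Semiring R] {l : List Eqn}
    (hl : ∀ e ∈ l, e.VarsLt n) (y : Fin n → R) :
    (ofList n l).Solves y ↔ ∀ e ∈ l, e.Holds (extendByZero y) := by
  simp only [Solves, ofList, Finset.mem_filter, Finset.mem_univ, true_and, Prod.forall]
  constructor
  · rintro ⟨hone, hadd, hmul⟩ e he
    cases e with
    | one k =>
      have hk : k < n := hl _ he
      simpa [Eqn.Holds, extendByZero, hk] using hone ⟨k, hk⟩ he
    | add i j k =>
      obtain ⟨hi, hj, hk⟩ : i < n ∧ j < n ∧ k < n := hl _ he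
      simpa [Eqn.Holds, extendByZero, hi, hj, hk] using hadd ⟨i, hi⟩ ⟨j, hj⟩ ⟨k, hk⟩ he
    | mul i j k =>
      obtain ⟨hi, hj, hk⟩ : i < n ∧ j < n ∧ k < n := hl _ he
      simpa [Eqn.Holds, extendByZero, hi, hj, hk] using hmul ⟨i, hi⟩ ⟨j, hj⟩ ⟨k, hk⟩ he
  · intro h
    refine ⟨fun k hk => ?_, fun i j k hk => ?_, fun i j k hk => ?_⟩ <;>
      simpa [Eqn.Holds, extendByZero_val] using h _ hk

end SystemEn

inductive Gate
  | zero
  | one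
  | add (i j : ℕ)
  | mul (i j : ℕ)

namespace Gate

def eval (v : ℕ → ℕ) : Gate → ℕ
  | zero => 0
  | one => 1
  | add i j => v i + v j
  | mul i j => v i * v j

def InputsLt (k : ℕ) : Gate → Prop
  | zero | one => True
  | add i j | mul i j => i < k ∧ j < k

def toEqn (k : ℕ) : Gate → Eqn
  | zero => .add k k k -- `x_k + x_k = x_k` forces `x_k = 0`
  | one => .one k
  | add i j => .add i j k
  | mul i j => .mul i j k

lemma holds_toEqn_iff (y : ℕ → ℕ) (k : ℕ) (g : Gate) :
    (g.toEqn k).Holds y ↔ y k = g.eval y := by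
  cases g <;> simp only [toEqn, Eqn.Holds, eval] <;> omega

lemma varsLt_toEqn {g : Gate} {k n : ℕ} (hg : g.InputsLt k) (hk : k < n) :
    (g.toEqn k).VarsLt n := by
  cases g <;> simp only [toEqn, Eqn.VarsLt, InputsLt] at hg ⊢ <;> omega

lemma eval_congr {g : Gate} {k : ℕ} (hg : g.InputsLt k) {v w : ℕ → ℕ}
    (h : ∀ i < k, v i = w i) : g.eval v = g.eval w := by
  cases g <;> simp only [eval, InputsLt] at hg ⊢ <;> simp only [h _ hg.1, h _ hg.2]

end Gate

/-! A circuit with `p` inputs is a list of gates, newest first: wires `0, …, p - 1` carry the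
inputs and wire `p + m` the output of the gate preceded by `m` gates in the list. -/
namespace Circuit

variable {p : ℕ}

def wireVal (x : Fin p → ℕ) : List Gate → ℕ → ℕ
  | [], k => if h : k < p then x ⟨k, h⟩ else 0
  | g :: c, k => if k = p + c.length then g.eval (wireVal x c) else wireVal x c k

variable (p) in
def WellFormed : List Gate → Prop
  | [] => True
  | g :: c => g.InputsLt (p + c.length) ∧ WellFormed c

variable (p) in
def eqns : List Gate → List Eqn
  | [] => []
  | g :: c => g.toEqn (p + c.length) :: eqns c

lemma wireVal_of_lt (x : Fin p → ℕ) (c : List Gate) {k : ℕ} (hk : k < p) :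
    wireVal x c k = x ⟨k, hk⟩ := by
  induction c with
  | nil => exact dif_pos hk
  | cons g c ih => rw [wireVal, if_neg (by omega), ih]

lemma wireVal_append (x : Fin p → ℕ) (c' : List Gate) {c : List Gate} {k : ℕ}
    (hk : k < p + c.length) : wireVal x (c' ++ c) k = wireVal x c k := by
  induction c' with
  | nil => rfl
  | cons g c' ih => rw [List.cons_append, wireVal, if_neg (by simp; omega), ih]

lemma varsLt_of_mem_eqns {c : List Gate} (hc : WellFormed p c) :
    ∀ e ∈ eqns p c, e.VarsLt (p + c.length) := by
  induction c with
  | nil => simp [eqns]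
  | cons g c ih =>
    simp only [eqns, List.mem_cons, forall_eq_or_imp]
    exact ⟨Gate.varsLt_toEqn hc.1 (by simp),
      fun e he => (ih hc.2 e he).mono (by simp)⟩

lemma holds_eqns_iff {c : List Gate} (hc : WellFormed p c) (Y : ℕ → ℕ) :
    (∀ e ∈ eqns p c, e.Holds Y) ↔
      ∀ k < p + c.length, Y k = wireVal (fun i : Fin p => Y i) c k := by
  induction c with
  | nil =>
    simp only [eqns, List.not_mem_nil, IsEmpty.forall_iff, implies_true, List.length_nil,
      add_zero, true_iff]
    intro k hk
    rw [wireVal_of_lt _ _ hk]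
  | cons g c ih =>
    rw [eqns, List.forall_mem_cons, Gate.holds_toEqn_iff, ih hc.2, List.length_cons]
    constructor
    · rintro ⟨hg, hc'⟩ k hk
      rw [wireVal]
      split_ifs with hk'
      · rw [hk', hg, Gate.eval_congr hc.1 hc']
      · exact hc' k (by omega)
    · intro h
      have hc' : ∀ k < p + c.length, Y k = wireVal (fun i : Fin p => Y i) c k := fun k hk => by
        simpa [wireVal, hk.ne] using h k (by omega)
      refine ⟨?_, hc'⟩
      simpa [wireVal, Gate.eval_congr hc.1 hc'] using h (p + c.length) (by omega)

lemma holds_eqns_extendByZero_iff {c : List Gate} (hc : WellFormed p c)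
    (y : Fin (p + c.length) → ℕ) :
    (∀ e ∈ eqns p c, e.Holds (extendByZero y)) ↔
      y = fun k : Fin (p + c.length) =>
        wireVal (fun i => y (Fin.castLE (Nat.le_add_right _ _) i)) c k := by
  have hx : (fun i : Fin p => extendByZero y i) =
      fun i => y (Fin.castLE (Nat.le_add_right _ _) i) :=
    funext fun i => extendByZero_val y (Fin.castLE _ i)
  rw [holds_eqns_iff hc, hx, _root_.funext_iff, Fin.forall_iff]
  exact forall₂_congr fun k hk => by rw [extendByZero, dif_pos hk]

def ComputesAt (c : List Gate) (k : ℕ) (f : (Fin p → ℕ) → ℕ) : Prop :=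
  k < p + c.length ∧ ∀ x, wireVal x c k = f x

lemma ComputesAt.append {c : List Gate} {k : ℕ} {f : (Fin p → ℕ) → ℕ}
    (h : ComputesAt c k f) (c' : List Gate) : ComputesAt (c' ++ c) k f :=
  ⟨by have := h.1; simp; omega, fun x => (wireVal_append x c' h.1).trans (h.2 x)⟩

-- Asking for an extension of every circuit lets independently built functions share one
-- circuit.
def Buildable (f : (Fin p → ℕ) → ℕ) : Prop :=
  ∀ c, WellFormed p c → ∃ c', WellFormed p (c' ++ c) ∧ ∃ k, ComputesAt (c' ++ c) k f

lemma Buildable.exists_computesAt_pair {f g : (Fin p → ℕ) → ℕ} (hf : Buildable f)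
    (hg : Buildable g) {c : List Gate} (hc : WellFormed p c) :
    ∃ c', WellFormed p (c' ++ c) ∧
      ∃ k₁ k₂, ComputesAt (c' ++ c) k₁ f ∧ ComputesAt (c' ++ c) k₂ g := by
  obtain ⟨c₁, hc₁, k₁, hk₁⟩ := hf c hc
  obtain ⟨c₂, hc₂, k₂, hk₂⟩ := hg _ hc₁
  refine ⟨c₂ ++ c₁, by rwa [List.append_assoc], k₁, k₂, ?_, ?_⟩ <;>
    rw [List.append_assoc]
  exacts [hk₁.append c₂, hk₂]

lemma buildable_input (i : Fin p) : Buildable fun x => x i :=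
  fun c hc => ⟨[], hc, i, by simp; omega, fun x => wireVal_of_lt x c i.isLt⟩

lemma buildable_gate (g : Gate) (hg : ∀ k, g.InputsLt k) (m : ℕ) (hm : ∀ v, g.eval v = m) :
    Buildable fun _ : Fin p → ℕ => m :=
  fun c hc => ⟨[g], ⟨hg _, hc⟩, p + c.length, by simp, fun x => by simp [wireVal, hm]⟩

lemma Buildable.add {f g : (Fin p → ℕ) → ℕ} (hf : Buildable f) (hg : Buildable g) :
    Buildable fun x => f x + g x := by
  intro c hc
  obtain ⟨c', hc', k₁, k₂, h₁, h₂⟩ := hf.exists_computesAt_pair hg hc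
  exact ⟨Gate.add k₁ k₂ :: c', ⟨⟨h₁.1, h₂.1⟩, hc'⟩, p + (c' ++ c).length, by simp,
    fun x => by simp [wireVal, Gate.eval, h₁.2 x, h₂.2 x]⟩

lemma Buildable.mul {f g : (Fin p → ℕ) → ℕ} (hf : Buildable f) (hg : Buildable g) :
    Buildable fun x => f x * g x := by
  intro c hc
  obtain ⟨c', hc', k₁, k₂, h₁, h₂⟩ := hf.exists_computesAt_pair hg hc
  exact ⟨Gate.mul k₁ k₂ :: c', ⟨⟨h₁.1, h₂.1⟩, hc'⟩, p + (c' ++ c).length, by simp,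
    fun x => by simp [wireVal, Gate.eval, h₁.2 x, h₂.2 x]⟩

lemma buildable_const : ∀ m : ℕ, Buildable fun _ : Fin p → ℕ => m
  | 0 => buildable_gate .zero (fun _ => trivial) 0 fun _ => rfl
  | m + 1 => (buildable_const m).add (buildable_gate .one (fun _ => trivial) 1 fun _ => rfl)

lemma exists_buildable_sub (D : MvPolynomial (Fin p) ℤ) :
    ∃ P Q : (Fin p → ℕ) → ℕ, Buildable P ∧ Buildable Q ∧
      ∀ x, eval (fun i => (x i : ℤ)) D = P x - Q x := by
  induction D using MvPolynomial.induction_on with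
  | C a =>
    refine ⟨_, _, buildable_const a.toNat, buildable_const (-a).toNat, fun x => ?_⟩
    rw [eval_C, Int.toNat_sub_toNat_neg]
  | add D E hD hE =>
    obtain ⟨P₁, Q₁, hP₁, hQ₁, h₁⟩ := hD
    obtain ⟨P₂, Q₂, hP₂, hQ₂, h₂⟩ := hE
    refine ⟨_, _, hP₁.add hP₂, hQ₁.add hQ₂, fun x => ?_⟩
    rw [eval_add, h₁, h₂]
    push_cast
    ring
  | mul_X D i hD =>
    obtain ⟨P, Q, hP, hQ, h⟩ := hD
    refine ⟨_, _, hP.mul (buildable_input i), hQ.mul (buildable_input i), fun x => ?_⟩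
    rw [eval_mul, eval_X, h]
    push_cast
    ring

variable (p) in
-- The new wire `o = p + c.length` carries `1`, so `x_a * x_o = x_b` says that wires `a`, `b` agree.
def eqSystem (c : List Gate) (a b : ℕ) : SystemEn (p + (c.length + 1)) :=
  .ofList _ (.mul a (p + c.length) b :: eqns p (.one :: c))

lemma solves_eqSystem_iff {c : List Gate} (hc : WellFormed p c) {a b : ℕ}
    {f g : (Fin p → ℕ) → ℕ} (ha : ComputesAt c a f) (hb : ComputesAt c b g)
    (y : Fin (p + (c.length + 1)) → ℕ) :
    (eqSystem p c a b).Solves y ↔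
      y = (fun k : Fin _ => wireVal (y ∘ Fin.castLE (Nat.le_add_right _ _)) (.one :: c) k) ∧
      f (y ∘ Fin.castLE (Nat.le_add_right _ _)) =
        g (y ∘ Fin.castLE (Nat.le_add_right _ _)) := by
  have hc' : WellFormed p (.one :: c) := ⟨trivial, hc⟩
  have hvars : ∀ e ∈ Eqn.mul a (p + c.length) b :: eqns p (.one :: c),
      e.VarsLt (p + (c.length + 1)) := by
    have := ha.1
    have := hb.1
    simp only [List.forall_mem_cons]
    exact ⟨⟨by omega, by omega, by omega⟩, varsLt_of_mem_eqns hc'⟩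
  rw [eqSystem, SystemEn.solves_ofList_iff hvars, List.forall_mem_cons,
    holds_eqns_extendByZero_iff hc', and_comm]
  refine and_congr_right fun hy => ?_
  set x := y ∘ Fin.castLE (Nat.le_add_right _ _)
  have hwire : ∀ {k}, k < p + c.length → extendByZero y k = wireVal x c k := fun hk => by
    rw [extendByZero, dif_pos (by omega), congrFun hy ⟨_, _⟩, wireVal, if_neg hk.ne]
    rfl
  have hone : extendByZero y (p + c.length) = 1 := by
    rw [extendByZero, dif_pos (by omega), congrFun hy ⟨_, _⟩, wireVal, if_pos rfl]
    rfl
  rw [Eqn.Holds, hwire ha.1, hwire hb.1, hone, mul_one, ha.2, hb.2]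

end Circuit

theorem stmt9_general (p : ℕ) (D : MvPolynomial (Fin p) ℤ) :
    ∃ (n : ℕ) (h : p < n) (T : SystemEn n),
      Set.BijOn (fun x : Fin n → ℕ => x ∘ Fin.castLE h.le)
        {x : Fin n → ℕ | T.Solves x}
        {x : Fin p → ℕ | eval (fun i => (x i : ℤ)) D = 0} := by
  obtain ⟨P, Q, hP, hQ, hD⟩ := Circuit.exists_buildable_sub D
  obtain ⟨c, hc, a, b, ha, hb⟩ := hP.exists_computesAt_pair hQ (c := []) trivial
  rw [List.append_nil] at hc ha hb
  refine ⟨p + (c.length + 1), by omega, Circuit.eqSystem p c a b,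
    Set.bijOn_of_rightInverse
      (s := fun x (k : Fin (p + (c.length + 1))) => Circuit.wireVal x (.one :: c) k)
      (fun x => funext fun i => Circuit.wireVal_of_lt _ _ i.isLt) fun y => ?_⟩
  rw [Set.mem_ofPred_eq, Circuit.solves_eqSystem_iff hc ha hb, Set.mem_ofPred_eq,
    Function.comp_def, hD, sub_eq_zero, Nat.cast_inj]

/-- for a polynomial `D ∈ ℤ[x₁,…,x_p]` of degree `≥ 1` in each variable,
there are `n > p` and a system `T ⊆ E_n` such that projecting to the first `p`
coordinates is a bijection from the solutions of `T` in non-negative integers onto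
the solutions of `D = 0` in non-negative integers. -/
theorem stmt9 (p : ℕ) (hp : 0 < p) (D : MvPolynomial (Fin p) ℤ)
    (hdeg : ∀ i : Fin p, 1 ≤ degreeOf i D) :
    ∃ (n : ℕ) (h : p < n) (T : SystemEn n),
      Set.BijOn (fun x : Fin n → ℕ => x ∘ Fin.castLE h.le)
        {x : Fin n → ℕ | T.Solves x}
        {x : Fin p → ℕ | eval (fun i => (x i : ℤ)) D = 0} :=
  stmt9_general p D
end

section
/- For every integer n ≥ 2, f(n) ≥ 2^(2^(n−1)). -/
namespace SystemEn

instance (n : ℕ) : Finite (SystemEn n) :=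
  Finite.of_injective (fun S : SystemEn n => (S.eqOne, S.addEq, S.mulEq)) <| by
    rintro ⟨⟩ ⟨⟩ h
    simp_all

theorem exists_bound_of_finite_solutions (n : ℕ) :
    ∃ b : ℕ, ∀ S : SystemEn n, {x : Fin n → ℤ | S.Solves x}.Finite →
      ∀ x : Fin n → ℤ, S.Solves x → ∀ i, |x i| ≤ (b : ℤ) := by
  set T : Set (Fin n → ℤ) :=
    ⋃ S : {S : SystemEn n // {x : Fin n → ℤ | S.Solves x}.Finite}, {x | S.1.Solves x}
  have hT : T.Finite := Set.finite_iUnion fun S => S.2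
  obtain ⟨b, hb⟩ := ((hT.prod Set.finite_univ).image fun p : (Fin n → ℤ) × Fin n =>
    (p.1 p.2).natAbs).bddAbove
  refine ⟨b, fun S hS x hx i => ?_⟩
  have hxT : x ∈ T := Set.mem_iUnion.2 ⟨⟨S, hS⟩, hx⟩
  rw [← Int.natCast_natAbs]
  exact_mod_cast hb ⟨(x, i), ⟨hxT, Set.mem_univ i⟩, rfl⟩

end SystemEn

theorem abs_le_fBound {n : ℕ} (S : SystemEn n) (hS : {x : Fin n → ℤ | S.Solves x}.Finite)
    {x : Fin n → ℤ} (hx : S.Solves x) (i : Fin n) : |x i| ≤ (fBound n : ℤ) :=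
  Nat.sInf_mem (SystemEn.exists_bound_of_finite_solutions n) S hS x hx i

def doublingSquaringSystem (m : ℕ) : SystemEn (m + 2) where
  eqOne := ∅
  addEq := {(0, 0, 1)}
  mulEq := Finset.univ.image fun k : Fin (m + 1) => (k.castSucc, k.castSucc, k.succ)

theorem solves_doublingSquaringSystem_iff {m : ℕ} {R : Type*} [Semiring R] (x : Fin (m + 2) → R) :
    (doublingSquaringSystem m).Solves x ↔
      x 0 + x 0 = x 1 ∧ ∀ k : Fin (m + 1), x k.castSucc * x k.castSucc = x k.succ := by
  simp [doublingSquaringSystem, SystemEn.Solves]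

theorem Fin.eq_pow_two_pow_of_succ_eq_sq {M : Type*} [Monoid M] {m : ℕ} {x : Fin (m + 1) → M}
    (hx : ∀ k : Fin m, x k.succ = x k.castSucc ^ 2) (i : Fin (m + 1)) :
    x i = x 0 ^ 2 ^ (i : ℕ) := by
  induction i using Fin.induction with
  | zero => simp
  | succ k ih => rw [hx, ih, ← pow_mul, Fin.val_succ, pow_succ, Fin.val_castSucc]

theorem Int.eq_zero_or_eq_two_of_add_self_eq_mul_self {c : ℤ} (h : c + c = c * c) :
    c = 0 ∨ c = 2 := by
  have : c * (c - 2) = 0 := by linarith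
  simpa [sub_eq_zero] using this

theorem solves_doublingSquaringSystem_iff_exists {m : ℕ} (x : Fin (m + 2) → ℤ) :
    (doublingSquaringSystem m).Solves x ↔
      ∃ c ∈ ({0, 2} : Set ℤ), x = fun i : Fin (m + 2) => c ^ 2 ^ (i : ℕ) := by
  rw [solves_doublingSquaringSystem_iff]
  constructor
  · rintro ⟨hadd, hmul⟩
    have hpow := Fin.eq_pow_two_pow_of_succ_eq_sq fun k => (hmul k).symm.trans (sq _).symm
    refine ⟨x 0, ?_, funext hpow⟩
    exact Int.eq_zero_or_eq_two_of_add_self_eq_mul_self (hadd.trans (hmul 0).symm)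
  · rintro ⟨c, hc, rfl⟩
    refine ⟨?_, fun k => ?_⟩
    · rcases hc with rfl | rfl <;> norm_num
    · simp only [Fin.val_succ, Fin.val_castSucc]
      rw [← pow_add, pow_succ, mul_two]

theorem finite_solutions_doublingSquaringSystem (m : ℕ) :
    {x : Fin (m + 2) → ℤ | (doublingSquaringSystem m).Solves x}.Finite :=
  (({0, 2} : Set ℤ).toFinite.image fun c (i : Fin (m + 2)) => c ^ 2 ^ (i : ℕ)).subset
    fun x hx => by
      obtain ⟨c, hc, rfl⟩ := (solves_doublingSquaringSystem_iff_exists x).1 hx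
      exact ⟨c, hc, rfl⟩

/-- for every integer `n ≥ 2`, `f(n) ≥ 2^(2^(n-1))`. -/
theorem stmt11 (n : ℕ) (hn : 2 ≤ n) : 2 ^ 2 ^ (n - 1) ≤ fBound n := by
  obtain ⟨m, rfl⟩ : ∃ m, n = m + 2 := ⟨n - 2, by omega⟩
  have hsol : (doublingSquaringSystem m).Solves fun i => (2 : ℤ) ^ 2 ^ (i : ℕ) :=
    (solves_doublingSquaringSystem_iff_exists _).2 ⟨2, by simp, rfl⟩
  have hbound := abs_le_fBound _ (finite_solutions_doublingSquaringSystem m) hsol (Fin.last _)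
  simp only [Fin.val_last, abs_pow, abs_two] at hbound
  exact_mod_cast hbound
end
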